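/- Splitting an ordered shuffle: for nonempty words k^1,...,k^m, the multiset of pairs (i, j) such that the concatenation ij is an ordered shuffle of k^1,...,k^m equals the multiset of pairs (i, j) obtained as follows: choose l ∈ {0,...,m}, split k^h = i^h j^h with j^h nonempty for h ≥ l+1 and set i^h = k^h for h ≤ l, let j be an ordered shuffle of j^{l+1},...,j^m, and let i be a shuffle of (an ordered shuffle of i^1,...,i^l) with (a shuffle of i^{l+1},...,i^m). -/
import Mathlib


/-- Multiset of all shuffles (interleavings) of two lists. -/
def shuffles {α : Type*} : List α → List α → Multiset (List α)
  | [], bs => {bs}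
  | a :: as, [] => {a :: as}
  | a :: as, b :: bs =>
      (shuffles as (b :: bs)).map (a :: ·) + (shuffles (a :: as) bs).map (b :: ·)
termination_by as bs => as.length + bs.length

/-- Half (ordered) shuffle of two words: the shuffles in which the last letter
of the second word stays last.  Convention: `osh2 a [] = 0`, `osh2 [] b = {b}`. -/
def osh2 {α : Type*} (a b : List α) : Multiset (List α) :=
  match b.getLast? with
  | none => 0
  | some x => (shuffles a b.dropLast).map (· ++ [x])

/-- Multiset of ordered shuffles of a list of words (iterated half-shuffle,
left to right): interleavings in which the final letters of the words appear
in the given relative order. -/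
def oshMany {α : Type*} (ws : List (List α)) : Multiset (List α) :=
  ws.foldl (fun acc w => acc.bind fun u => osh2 u w) {([] : List α)}

/-- Multiset of all shuffles of a list of words. -/
def shMany {α : Type*} (ws : List (List α)) : Multiset (List α) :=
  ws.foldl (fun acc w => acc.bind fun u => shuffles u w) {([] : List α)}

/-- All splittings of a word into a prefix/suffix pair. -/
def splits {α : Type*} (w : List α) : Multiset (List α × List α) :=
  (Multiset.range (w.length + 1)).map fun n => (w.take n, w.drop n)

/-- All splittings of a word into a prefix and a *nonempty* suffix. -/
def splitsNE {α : Type*} (w : List α) : Multiset (List α × List α) :=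
  (Multiset.range w.length).map fun n => (w.take n, w.drop n)

/-- All ways of choosing one element from each multiset in a list, in order. -/
def msections {α : Type*} : List (Multiset α) → Multiset (List α)
  | [] => {([] : List α)}
  | m :: ms => m.bind fun a => (msections ms).map (a :: ·)

/-! ### Auxiliary lemmas -/

@[simp] lemma shuffles_nil_left {α : Type*} (bs : List α) : shuffles [] bs = {bs} := by
  cases bs <;> simp [shuffles]

@[simp] lemma shuffles_nil_right {α : Type*} (as : List α) : shuffles as [] = {as} := by
  cases as <;> simp [shuffles]

@[simp] lemma bind_singleton_id {α : Type*} (m : Multiset α) :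
    (m.bind fun s => ({s} : Multiset α)) = m := by
  simpa using Multiset.bind_singleton m id

lemma shuffles_cons_cons {α : Type*} (a b : α) (as bs : List α) :
    shuffles (a :: as) (b :: bs) =
      (shuffles as (b :: bs)).map (a :: ·) + (shuffles (a :: as) bs).map (b :: ·) := by
  simp [shuffles]

theorem shuffles_assoc {α : Type*} (as bs cs : List α) :
    (shuffles as bs).bind (fun s => shuffles s cs)
      = (shuffles bs cs).bind (fun s => shuffles as s) := by
  match as, bs, cs with
  | [], bs, cs => simp
  | a :: as, [], cs => simp
  | a :: as, b :: bs, [] => simp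
  | x :: as, y :: bs, z :: cs =>
    have IH1 := shuffles_assoc as (y :: bs) (z :: cs)
    have IH2 := shuffles_assoc (x :: as) bs (z :: cs)
    have IH3 := shuffles_assoc (x :: as) (y :: bs) cs
    have hL : (shuffles (x :: as) (y :: bs)).bind (fun s => shuffles s (z :: cs))
        = ((shuffles as (y :: bs)).bind (fun s => shuffles s (z :: cs))).map (x :: ·)
          + ((shuffles (x :: as) bs).bind (fun s => shuffles s (z :: cs))).map (y :: ·)
          + ((shuffles (x :: as) (y :: bs)).bind (fun s => shuffles s cs)).map (z :: ·) := by
      rw [shuffles_cons_cons x y as bs]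
      simp only [Multiset.add_bind, Multiset.bind_map]
      simp only [shuffles_cons_cons _ z, Multiset.bind_add, ← Multiset.map_bind]
      rw [Multiset.map_add]
      abel
    have hR : (shuffles (y :: bs) (z :: cs)).bind (fun s => shuffles (x :: as) s)
        = ((shuffles (y :: bs) (z :: cs)).bind (fun s => shuffles as s)).map (x :: ·)
          + ((shuffles bs (z :: cs)).bind (fun s => shuffles (x :: as) s)).map (y :: ·)
          + ((shuffles (y :: bs) cs).bind (fun s => shuffles (x :: as) s)).map (z :: ·) := by
      rw [shuffles_cons_cons y z bs cs]
      simp only [Multiset.add_bind, Multiset.bind_map]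
      simp only [shuffles_cons_cons x, Multiset.bind_add, ← Multiset.map_bind]
      rw [Multiset.map_add]
      abel
    rw [hL, hR, IH1, IH2, IH3]
termination_by as.length + bs.length + cs.length

lemma Multiset.range_succ' (n : ℕ) :
    Multiset.range (n + 1) = 0 ::ₘ (Multiset.range n).map (· + 1) := by
  rw [Multiset.range, Multiset.range, List.range_succ_eq_map]
  rfl

@[simp] lemma splits_nil {α : Type*} : splits ([] : List α) = {([], [])} := by
  simp [splits]

lemma splits_cons {α : Type*} (x : α) (w : List α) :
    splits (x :: w) = ([], x :: w) ::ₘ (splits w).map (fun p => (x :: p.1, p.2)) := by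
  simp only [splits, List.length_cons, Multiset.range_succ', Multiset.map_cons,
    Multiset.map_map]
  simp [Function.comp_def]

/-- The split-shuffle compatibility expression. -/
def splitShuf {α : Type*} (a b : List α) : Multiset (List α × List α) :=
  (splits a).bind fun p => (splits b).bind fun q =>
    (shuffles p.1 q.1).bind fun i => (shuffles p.2 q.2).map fun j => (i, j)

theorem shuffles_bind_splits {α : Type*} (a b : List α) :
    (shuffles a b).bind splits = splitShuf a b := by
  match a, b with
  | [], b => simp [splitShuf]
  | a :: as, [] => simp [splitShuf, splits_cons]
  | x :: as, y :: bs =>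
    have IH1 := shuffles_bind_splits as (y :: bs)
    have IH2 := shuffles_bind_splits (x :: as) bs
    simp only [splitShuf, splits_cons, shuffles_cons_cons, shuffles_nil_left,
      shuffles_nil_right, Multiset.cons_bind, Multiset.bind_cons, Multiset.add_bind,
      Multiset.bind_add, Multiset.bind_map, Multiset.map_bind, Multiset.map_map,
      Multiset.singleton_bind, Multiset.map_add]
    conv_lhs => rw [← Multiset.map_bind, ← Multiset.map_bind]
    rw [IH1, IH2]
    simp only [splitShuf, splits_cons, shuffles_cons_cons, shuffles_nil_left,
      shuffles_nil_right, Multiset.cons_bind, Multiset.bind_cons, Multiset.add_bind,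
      Multiset.bind_add, Multiset.bind_map, Multiset.map_bind, Multiset.map_map,
      Multiset.singleton_bind, Multiset.map_add, Function.comp_def]
    abel
termination_by a.length + b.length

@[simp] lemma osh2_concat {α : Type*} (u w : List α) (x : α) :
    osh2 u (w ++ [x]) = (shuffles u w).map (· ++ [x]) := by
  simp [osh2, List.getLast?_concat, List.dropLast_concat]

@[simp] lemma oshMany_nil {α : Type*} : oshMany ([] : List (List α)) = {([] : List α)} := rfl

lemma oshMany_concat {α : Type*} (ws : List (List α)) (w : List α) :
    oshMany (ws ++ [w]) = (oshMany ws).bind fun u => osh2 u w := by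
  simp [oshMany, List.foldl_append]

@[simp] lemma shMany_nil {α : Type*} : shMany ([] : List (List α)) = {([] : List α)} := rfl

lemma shMany_concat {α : Type*} (ws : List (List α)) (w : List α) :
    shMany (ws ++ [w]) = (shMany ws).bind fun u => shuffles u w := by
  simp [shMany, List.foldl_append]

lemma splits_concat {α : Type*} (w : List α) (x : α) :
    splits (w ++ [x])
      = (w ++ [x], ([] : List α)) ::ₘ (splits w).map (fun p => (p.1, p.2 ++ [x])) := by
  rw [splits, show (w ++ [x]).length + 1 = (w.length + 1) + 1 by simp,
    Multiset.range_succ, Multiset.map_cons]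
  congr 1
  · simp
  · rw [splits, Multiset.map_map]
    refine Multiset.map_congr rfl fun n hn => ?_
    rw [Multiset.mem_range] at hn
    have hn' : n ≤ w.length := Nat.lt_succ_iff.mp hn
    simp [List.take_append_of_le_length hn', List.drop_append_of_le_length hn']

lemma splitsNE_concat {α : Type*} (w : List α) (x : α) :
    splitsNE (w ++ [x]) = (splits w).map (fun p => (p.1, p.2 ++ [x])) := by
  rw [splitsNE, show (w ++ [x]).length = w.length + 1 by simp, splits, Multiset.map_map]
  refine Multiset.map_congr rfl fun n hn => ?_
  rw [Multiset.mem_range] at hn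
  have hn' : n ≤ w.length := Nat.lt_succ_iff.mp hn
  simp [List.take_append_of_le_length hn', List.drop_append_of_le_length hn']

lemma msections_concat {α : Type*} (ms : List (Multiset α)) (m : Multiset α) :
    msections (ms ++ [m]) = (msections ms).bind fun ps => m.map (fun p => ps ++ [p]) := by
  induction ms with
  | nil => simp [msections]
  | cons m0 ms ih =>
    rw [List.cons_append]
    simp only [msections, ih, Multiset.map_bind, Multiset.bind_map,
      Multiset.bind_assoc, Multiset.map_map]
    simp [Function.comp_def]

lemma finsetSum_bind {ι β γ : Type*} (s : Finset ι) (f : ι → Multiset β)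
    (g : β → Multiset γ) : (∑ i ∈ s, f i).bind g = ∑ i ∈ s, (f i).bind g := by
  induction s using Finset.cons_induction with
  | empty => simp
  | cons i s hi ih => simp [Finset.sum_cons, Multiset.add_bind, ih]

lemma splitShuf_map_concat {α : Type*} (u k' : List α) (x : α) :
    (splitShuf u k').map (fun p => (p.1, p.2 ++ [x]))
      = (splits u).bind fun p => (splits k').bind fun q =>
          (shuffles p.1 q.1).bind fun i => (shuffles p.2 q.2).map fun j => (i, j ++ [x]) := by
  simp [splitShuf, Multiset.map_bind, Multiset.map_map]

lemma core_reorder {α : Type*} (a b j k' : List α) (x : α) :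
    ((shuffles a b).bind fun u1 => (splits k').bind fun q =>
        (shuffles u1 q.1).bind fun i => (shuffles j q.2).map fun t => (i, t ++ [x]))
      = (splits k').bind fun q => (shuffles j q.2).bind fun t =>
          (shuffles b q.1).bind fun b' => (shuffles a b').map fun i => (i, t ++ [x]) := by
  rw [Multiset.bind_bind]
  refine Multiset.bind_congr fun q _ => ?_
  rw [← Multiset.bind_assoc, shuffles_assoc a b q.1, Multiset.bind_assoc]
  conv_lhs => enter [2, b']; rw [Multiset.bind_map_comm]
  rw [Multiset.bind_bind]

lemma stepEq {α : Type*} (S : Multiset (List (List α × List α)))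
    (M : Multiset (List α)) (k' : List α) (x : α)
    (J B : List (List α × List α) → Multiset (List α)) :
    ((S.bind fun ps => (J ps).bind fun j => M.bind fun a => (B ps).bind fun b =>
        (shuffles a b).map fun i => (i, j)).bind fun p =>
          (splits k').bind fun q => (shuffles p.1 q.1).bind fun i =>
            (shuffles p.2 q.2).map fun j => (i, j ++ [x]))
      = S.bind fun ps => (splits k').bind fun q => (J ps).bind fun j =>
          (shuffles j q.2).bind fun t => M.bind fun a => (B ps).bind fun b =>
            (shuffles b q.1).bind fun b' => (shuffles a b').map fun i => (i, t ++ [x]) := by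
  simp only [Multiset.bind_assoc, Multiset.bind_map]
  conv_lhs => enter [2, ps, 2, j, 2, a, 2, b]; rw [core_reorder a b j k' x]
  conv_lhs => enter [2, ps, 2, j, 2, a]; rw [Multiset.bind_bind]
  conv_lhs => enter [2, ps, 2, j]; rw [Multiset.bind_bind]
  conv_lhs => enter [2, ps]; rw [Multiset.bind_bind]
  conv_lhs => enter [2, ps, 2, q, 2, j, 2, a]; rw [Multiset.bind_bind]
  conv_lhs => enter [2, ps, 2, q, 2, j]; rw [Multiset.bind_bind]

/-- **splitting an ordered shuffle.** For nonempty words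
`k¹,…,kᵐ`, the multiset of pairs `(i, j)` with `i ++ j` an ordered shuffle
of `k¹,…,kᵐ` equals the multiset of pairs obtained by: choosing
`l ∈ {0,…,m}`; setting `iʰ = kʰ` for `h ≤ l`; splitting `kʰ = iʰ jʰ` with
`jʰ` nonempty for `h ≥ l+1`; letting `j` be an ordered shuffle of
`j^{l+1},…,jᵐ`; and letting `i` be a shuffle of an ordered shuffle of
`i¹,…,iˡ` with a shuffle of `i^{l+1},…,iᵐ`. -/
theorem orderedShuffle_splitting {α : Type*} (ks : List (List α))
    (hks : ∀ k ∈ ks, k ≠ []) :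
    (oshMany ks).bind splits =
      ∑ l ∈ Finset.range (ks.length + 1),
        (msections ((ks.drop l).map splitsNE)).bind fun ps =>
          (oshMany (ps.map Prod.snd)).bind fun j =>
            (oshMany (ks.take l)).bind fun a =>
              (shMany (ps.map Prod.fst)).bind fun b =>
                (shuffles a b).map fun i => (i, j) := by
  induction ks using List.reverseRecOn with
  | nil => simp [oshMany, shMany, msections]
  | append_singleton ks' k IH =>
    have hk : k ≠ [] := hks k (by simp)
    have hks' : ∀ w ∈ ks', w ≠ [] := fun w hw => hks w (by simp [hw])
    obtain ⟨k', x, rfl⟩ : ∃ k' x, k = k' ++ [x] :=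
      ⟨k.dropLast, k.getLast hk, (List.dropLast_append_getLast hk).symm⟩
    specialize IH hks'
    -- normalize the length and split off the top summand
    rw [show (ks' ++ [k' ++ [x]]).length + 1 = (ks'.length + 1) + 1 by simp,
      Finset.sum_range_succ]
    have hTop : ((msections (List.map splitsNE (List.drop (ks'.length + 1) (ks' ++ [k' ++ [x]])))).bind fun ps =>
          (oshMany (List.map Prod.snd ps)).bind fun j =>
            (oshMany (List.take (ks'.length + 1) (ks' ++ [k' ++ [x]]))).bind fun a =>
              (shMany (List.map Prod.fst ps)).bind fun b => Multiset.map (fun i => (i, j)) (shuffles a b))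
        = (oshMany ks').bind fun u => (shuffles u k').map fun s => (s ++ [x], ([] : List α)) := by
      rw [show List.drop (ks'.length + 1) (ks' ++ [k' ++ [x]]) = [] by simp,
        show List.take (ks'.length + 1) (ks' ++ [k' ++ [x]]) = ks' ++ [k' ++ [x]] by simp,
        oshMany_concat]
      simp only [List.map_nil, msections, Multiset.singleton_bind, oshMany_nil, shMany_nil,
        shuffles_nil_right, osh2_concat, Multiset.bind_assoc, Multiset.bind_map,
        Multiset.map_map, Multiset.bind_singleton, Multiset.map_singleton]
    rw [hTop]
    conv_lhs =>
      rw [oshMany_concat, Multiset.bind_assoc]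
      enter [2, u]
      rw [osh2_concat, Multiset.bind_map]
      enter [2, s]
      rw [splits_concat]
    conv_lhs =>
      enter [2, u]
      rw [Multiset.bind_cons, ← Multiset.map_bind, shuffles_bind_splits, splitShuf_map_concat]
    rw [Multiset.bind_add]
    conv_lhs => rw [add_comm]
    congr 1
    rw [← Multiset.bind_assoc, IH, finsetSum_bind]
    refine Finset.sum_congr rfl fun l hl => ?_
    rw [Finset.mem_range, Nat.lt_succ_iff] at hl
    rw [stepEq (msections (List.map splitsNE (List.drop l ks'))) (oshMany (List.take l ks'))
      k' x (fun ps => oshMany (List.map Prod.snd ps)) (fun ps => shMany (List.map Prod.fst ps))]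
    rw [List.drop_append_of_le_length hl, List.take_append_of_le_length hl, List.map_append,
      List.map_cons, List.map_nil, msections_concat, splitsNE_concat]
    simp only [Multiset.bind_assoc, Multiset.bind_map, List.map_append, List.map_cons,
      List.map_nil, oshMany_concat, shMany_concat, osh2_concat]
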